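/- arXiv:cs/0202021 — 2 statements merged into one kernel-verified Lean document; each statement's English description precedes it below -/
import Mathlib

section
/- Assume the compactness assumption on U. Let K be a set of pairs of formulas (conditional assertions) and α, β formulas. Then the following are equivalent: (1) for every cumulative model V whose relation ⊦_V contains K, one has α ⊦_V β; (2) the pair (α, β) belongs to the smallest cumulative consequence relation containing K. -/
namespace KLM

/-- Classical propositional formulas over a set `V` of propositional variables. -/
inductive Form (V : Type) : Type
  | var : V → Form V
  | fls : Form V
  | neg : Form V → Form V
  | conj : Form V → Form V → Form V
  | disj : Form V → Form V → Form V
  | impl : Form V → Form V → Form V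
  | biim : Form V → Form V → Form V

/-- A world is a truth assignment to the propositional variables. -/
abbrev World (V : Type) := V → Prop

/-- Satisfaction of a formula by a world (usual classical semantics). -/
def Sat {V : Type} (u : World V) : Form V → Prop
  | Form.var p => u p
  | Form.fls => False
  | Form.neg a => ¬ Sat u a
  | Form.conj a b => Sat u a ∧ Sat u b
  | Form.disj a b => Sat u a ∨ Sat u b
  | Form.impl a b => Sat u a → Sat u b
  | Form.biim a b => Sat u a ↔ Sat u b

variable {V : Type}

/-- `⊨ α` : every world of the universe `U` satisfies `α`. -/
def Valid (U : Set (World V)) (a : Form V) : Prop := ∀ u ∈ U, Sat u a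

/-- Reflexivity: α ⊦ α. -/
def Reflexivity (C : Form V → Form V → Prop) : Prop := ∀ a, C a a

/-- Left Logical Equivalence. -/
def LLE (U : Set (World V)) (C : Form V → Form V → Prop) : Prop :=
  ∀ a b c, Valid U (Form.biim a b) → C a c → C b c

/-- Right Weakening. -/
def RW (U : Set (World V)) (C : Form V → Form V → Prop) : Prop :=
  ∀ a b c, Valid U (Form.impl a b) → C c a → C c b

/-- Cut. -/
def CutRule (C : Form V → Form V → Prop) : Prop :=
  ∀ a b c, C (Form.conj a b) c → C a b → C a c

/-- Cautious Monotonicity. -/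
def CautMono (C : Form V → Form V → Prop) : Prop :=
  ∀ a b c, C a b → C a c → C (Form.conj a b) c

/-- A consequence relation is cumulative iff it satisfies Reflexivity, LLE, RW,
Cut and Cautious Monotonicity. -/
def Cumulative (U : Set (World V)) (C : Form V → Form V → Prop) : Prop :=
  Reflexivity C ∧ LLE U C ∧ RW U C ∧ CutRule C ∧ CautMono C

/-- And rule. -/
def AndRule (C : Form V → Form V → Prop) : Prop :=
  ∀ a b c, C a b → C a c → C a (Form.conj b c)

/-- Or rule. -/
def OrRule (C : Form V → Form V → Prop) : Prop :=
  ∀ a b c, C a c → C b c → C (Form.disj a b) c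

/-- A consequence relation is preferential iff it is cumulative and satisfies Or. -/
def Preferential (U : Set (World V)) (C : Form V → Form V → Prop) : Prop :=
  Cumulative U C ∧ OrRule C

/-- Monotonicity. -/
def Monot (U : Set (World V)) (C : Form V → Form V → Prop) : Prop :=
  ∀ a b c, Valid U (Form.impl a b) → C b c → C a c

/-- EHD : easy half of the deduction theorem. -/
def EHD (C : Form V → Form V → Prop) : Prop :=
  ∀ a b c, C a (Form.impl b c) → C (Form.conj a b) c

/-- Transitivity. -/
def TransRule (C : Form V → Form V → Prop) : Prop :=
  ∀ a b c, C a b → C b c → C a c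

/-- Contraposition. -/
def Contraposition (C : Form V → Form V → Prop) : Prop :=
  ∀ a b, C a b → C (Form.neg b) (Form.neg a)

/-- The rule S: from α ∧ β ⊦ γ infer α ⊦ β → γ. -/
def SRule (C : Form V → Form V → Prop) : Prop :=
  ∀ a b c, C (Form.conj a b) c → C a (Form.impl b c)

/-- MPC : modus ponens in the consequent. -/
def MPC (C : Form V → Form V → Prop) : Prop :=
  ∀ a b c, C a (Form.impl b c) → C a b → C a c

/-- Equivalence rule. -/
def EquivRule (C : Form V → Form V → Prop) : Prop :=
  ∀ a b c, C a b → C b a → C a c → C b c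

/-- Loop rule. -/
def LoopRule (C : Form V → Form V → Prop) : Prop :=
  ∀ k : ℕ, 1 ≤ k → ∀ al : ℕ → Form V,
    (∀ i < k, C (al i) (al (i + 1))) → C (al k) (al 0) → C (al 0) (al k)

/-- A world `m ∈ U` is normal for `α` iff it satisfies every plausible consequence of `α`. -/
def NormalFor (U : Set (World V)) (C : Form V → Form V → Prop)
    (a : Form V) (m : World V) : Prop :=
  m ∈ U ∧ ∀ b, C a b → Sat m b

/-- Compactness assumption on the universe `U`: a set of formulas all of whose finite
subsets are satisfiable (in `U`) is satisfiable (in `U`). -/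
def Compactness (U : Set (World V)) : Prop :=
  ∀ G : Set (Form V),
    (∀ F : Finset (Form V), ↑F ⊆ G → ∃ u ∈ U, ∀ a ∈ F, Sat u a) →
    ∃ u ∈ U, ∀ a ∈ G, Sat u a

/-- `t` is minimal in `A` (w.r.t. `prec`) iff `t ∈ A` and no element of `A` is below `t`. -/
def MinimalIn {S : Type} (prec : S → S → Prop) (A : Set S) (t : S) : Prop :=
  t ∈ A ∧ ∀ s ∈ A, ¬ prec s t

/-- `A` is smooth iff every element of `A` is minimal in `A` or has a minimal
element of `A` below it. -/
def Smooth {S : Type} (prec : S → S → Prop) (A : Set S) : Prop :=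
  ∀ t ∈ A, MinimalIn prec A t ∨ ∃ s, prec s t ∧ MinimalIn prec A s

/-- A cumulative model: states labeled by nonempty sets of worlds of `U`, with a
binary preference relation satisfying the smoothness condition. -/
structure CumulModel (V : Type) (U : Set (World V)) where
  S : Type
  l : S → Set (World V)
  l_sub : ∀ s, l s ⊆ U
  l_ne : ∀ s, (l s).Nonempty
  prec : S → S → Prop
  smooth : ∀ a : Form V, Smooth prec {s : S | ∀ u ∈ l s, Sat u a}

/-- A state satisfies `α` iff every world in its label does. -/
def CumulModel.StateSat {V : Type} {U : Set (World V)} (W : CumulModel V U)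
    (s : W.S) (a : Form V) : Prop :=
  ∀ u ∈ W.l s, Sat u a

/-- The consequence relation defined by a cumulative model: `α ⊦_W β` iff every state
minimal in `α̂` satisfies `β`. -/
def CumulModel.Cons {V : Type} {U : Set (World V)} (W : CumulModel V U)
    (a b : Form V) : Prop :=
  ∀ s : W.S, MinimalIn W.prec {t : W.S | W.StateSat t a} s → W.StateSat s b

/-- A preferential model: states labeled by single worlds of `U`, with a strict
partial order satisfying the smoothness condition. -/
structure PrefModel (V : Type) (U : Set (World V)) where
  S : Type
  l : S → World V
  l_mem : ∀ s, l s ∈ U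
  prec : S → S → Prop
  irrefl : ∀ s, ¬ prec s s
  trans : ∀ s t r, prec s t → prec t r → prec s r
  smooth : ∀ a : Form V, Smooth prec {s : S | Sat (l s) a}

/-- The consequence relation defined by a preferential model. -/
def PrefModel.Cons {V : Type} {U : Set (World V)} (W : PrefModel V U)
    (a b : Form V) : Prop :=
  ∀ s : W.S, MinimalIn W.prec {t : W.S | Sat (W.l t) a} s → Sat (W.l s) b

section Stmt7Aux

variable {U : Set (World V)} {C : Form V → Form V → Prop}

/-- The relation defined by any cumulative model is cumulative. -/
lemma cons_cumulative (W : CumulModel V U) : Cumulative U W.Cons := by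
  refine ⟨fun a s hs => hs.1, ?_, ?_, ?_, ?_⟩
  · -- LLE
    intro a b c hval hac s hs
    have heq : ∀ t : W.S, W.StateSat t a ↔ W.StateSat t b := by
      intro t
      constructor <;> intro h u hu
      · exact (hval u (W.l_sub t hu)).mp (h u hu)
      · exact (hval u (W.l_sub t hu)).mpr (h u hu)
    exact hac s ⟨(heq s).mpr hs.1, fun t ht => hs.2 t ((heq t).mp ht)⟩
  · -- RW
    intro a b c hval hca s hs u hu
    exact hval u (W.l_sub s hu) (hca s hs u hu)
  · -- Cut
    intro a b c h1 h2 s hs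
    have hb : W.StateSat s b := h2 s hs
    have hsab : W.StateSat s (Form.conj a b) := fun u hu => ⟨hs.1 u hu, hb u hu⟩
    exact h1 s ⟨hsab, fun t ht => hs.2 t (fun u hu => (ht u hu).1)⟩
  · -- CM
    intro a b c hab hac s hs
    have hsa : W.StateSat s a := fun u hu => (hs.1 u hu).1
    rcases W.smooth a s hsa with hmin | ⟨t, hts, htmin⟩
    · exact hac s hmin
    · exfalso
      have htb : W.StateSat t b := hab t htmin
      exact hs.2 t (fun u hu => ⟨htmin.1 u hu, htb u hu⟩) hts

/-- The And rule is derivable in cumulative relations. -/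
lemma derived_and (hC : Cumulative U C) : AndRule C := by
  obtain ⟨hrefl, hlle, hrw, hcut, hcm⟩ := hC
  intro a b c hab hac
  have h1 : C (Form.conj a b) c := hcm a b c hab hac
  have h2 : C (Form.conj (Form.conj a b) c) (Form.conj b c) := by
    refine hrw _ _ _ ?_ (hrefl _)
    intro u _ h
    exact ⟨h.1.2, h.2⟩
  have h3 : C (Form.conj a b) (Form.conj b c) := hcut _ _ _ h2 h1
  exact hcut _ _ _ h3 hab

/-- The equivalence rule is derivable in cumulative relations. -/
lemma derived_equiv (hC : Cumulative U C) : EquivRule C := by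
  obtain ⟨hrefl, hlle, hrw, hcut, hcm⟩ := hC
  intro a b c hab hba hac
  have h1 : C (Form.conj a b) c := hcm a b c hab hac
  have h2 : C (Form.conj b a) c := by
    refine hlle _ _ _ ?_ h1
    intro u _
    exact ⟨fun h => ⟨h.2, h.1⟩, fun h => ⟨h.2, h.1⟩⟩
  exact hcut _ _ _ h2 hba

/-- From `C a fls` everything follows. -/
lemma cons_of_fls (hC : Cumulative U C) {a : Form V} (h : C a Form.fls) (b : Form V) :
    C a b := by
  refine hC.2.2.1 _ _ _ ?_ h
  intro u _ hf
  exact False.elim hf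

/-- Conjunction of the `C β`-consequences appearing in a list. -/
lemma exists_conj (hC : Cumulative U C) (β x : Form V) :
    ∀ L : List (Form V), (∀ γ ∈ L, C β γ ∨ γ = x) →
      ∃ δ, C β δ ∧ ∀ u, Sat u δ → ∀ γ ∈ L, γ ≠ x → Sat u γ := by
  intro L
  induction L with
  | nil =>
    intro _
    refine ⟨Form.neg Form.fls, hC.2.2.1 _ _ _ (fun u _ _ hf => hf) (hC.1 β), ?_⟩
    intro u _ γ hγ _
    exact absurd hγ List.not_mem_nil
  | cons γ L ih =>
    intro h
    obtain ⟨δ, hδ, hsat⟩ := ih (fun γ' hγ' => h γ' (List.mem_cons_of_mem _ hγ'))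
    rcases h γ List.mem_cons_self with hc | hx
    · refine ⟨Form.conj γ δ, derived_and hC _ _ _ hc hδ, ?_⟩
      intro u hu γ' hγ' hne
      rcases List.mem_cons.mp hγ' with rfl | hmem
      · exact hu.1
      · exact hsat u hu.2 γ' hmem hne
    · refine ⟨δ, hδ, ?_⟩
      intro u hu γ' hγ' hne
      rcases List.mem_cons.mp hγ' with rfl | hmem
      · exact absurd hx hne
      · exact hsat u hu γ' hmem hne

/-- Key compactness lemma: if `¬ C β α` then some world normal for `β` falsifies `α`. -/
lemma key_lemma (hcomp : Compactness U) (hC : Cumulative U C) {β α : Form V}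
    (h : ¬ C β α) : ∃ m, NormalFor U C β m ∧ ¬ Sat m α := by
  set G : Set (Form V) := {γ | C β γ} ∪ {Form.neg α} with hG
  have hfin : ∀ F : Finset (Form V), ↑F ⊆ G → ∃ u ∈ U, ∀ γ ∈ F, Sat u γ := by
    intro F hF
    obtain ⟨δ, hδC, hδsat⟩ := exists_conj hC β (Form.neg α) F.toList (by
      intro γ hγ
      have hγF : γ ∈ F := by simpa using hγ
      rcases hF hγF with hmem | hmem
      · exact Or.inl hmem
      · exact Or.inr hmem)
    have hex : ∃ u ∈ U, Sat u δ ∧ ¬ Sat u α := by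
      by_contra hno
      push_neg at hno
      exact h (hC.2.2.1 δ α β (fun u hu hδ => hno u hu hδ) hδC)
    obtain ⟨u, hu, huδ, huα⟩ := hex
    refine ⟨u, hu, ?_⟩
    intro γ hγ
    by_cases hne : γ = Form.neg α
    · subst hne; exact huα
    · exact hδsat u huδ γ (by simpa using hγ) hne
  obtain ⟨m, hmU, hmG⟩ := hcomp G hfin
  refine ⟨m, ⟨hmU, fun γ hγ => hmG γ (Or.inl hγ)⟩, hmG (Form.neg α) (Or.inr rfl)⟩

lemma state_nonempty (hcomp : Compactness U) (hC : Cumulative U C) {a : Form V}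
    (h : ¬ C a Form.fls) : ∃ m, NormalFor U C a m := by
  obtain ⟨m, hm, -⟩ := key_lemma hcomp hC h
  exact ⟨m, hm⟩

lemma not_fls_of_state {t : Form V} (ht : ∃ m, NormalFor U C t m) : ¬ C t Form.fls := by
  intro h
  obtain ⟨m, hm⟩ := ht
  exact hm.2 Form.fls h

/-- If a state entails `a`, then `a` is consistent. -/
lemma not_fls_of_cons (hC : Cumulative U C) {t a : Form V}
    (ht : ∃ m, NormalFor U C t m) (hta : C t a) : ¬ C a Form.fls := by
  intro hafls
  have hat : C a t := cons_of_fls hC hafls t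
  exact not_fls_of_state ht (derived_equiv hC a t Form.fls hat hta hafls)

/-- Characterization of state satisfaction in the canonical model. -/
lemma stateSat_iff (hcomp : Compactness U) (hC : Cumulative U C) {s : Form V}
    (α : Form V) : (∀ m, NormalFor U C s m → Sat m α) ↔ C s α := by
  constructor
  · intro h
    by_contra hns
    obtain ⟨m, hm, hmα⟩ := key_lemma hcomp hC hns
    exact hmα (h m hm)
  · intro h m hm
    exact hm.2 α h

/-- The canonical cumulative model of a cumulative relation `C`. -/
def canon (hcomp : Compactness U) (hC : Cumulative U C) : CumulModel V U where
  S := {a : Form V // ∃ m, NormalFor U C a m}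
  l s := {m | NormalFor U C s.val m}
  l_sub s m hm := hm.1
  l_ne s := s.prop
  prec s t := C t.val s.val ∧ ¬ C s.val t.val
  smooth := by
    intro a t ht
    have hCta : C t.val a := (stateSat_iff hcomp hC a).mp ht
    have ha : ¬ C a Form.fls := not_fls_of_cons hC t.prop hCta
    by_cases hat : C a t.val
    · left
      refine ⟨ht, ?_⟩
      intro s hs hprec
      have hsa : C s.val a := (stateSat_iff hcomp hC a).mp hs
      have h1 : C a s.val := derived_equiv hC t.val a s.val hCta hat hprec.1
      exact hprec.2 (derived_equiv hC a s.val t.val h1 hsa hat)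
    · right
      refine ⟨⟨a, state_nonempty hcomp hC ha⟩, ⟨hCta, hat⟩, ?_, ?_⟩
      · exact (stateSat_iff hcomp hC a).mpr (hC.1 a)
      · intro s hs hprec
        exact hprec.2 ((stateSat_iff hcomp hC a).mp hs)

/-- The canonical model defines exactly `C`. -/
lemma canon_cons (hcomp : Compactness U) (hC : Cumulative U C) (a b : Form V) :
    (canon hcomp hC).Cons a b ↔ C a b := by
  constructor
  · intro h
    by_cases ha : C a Form.fls
    · exact cons_of_fls hC ha b
    · have hsa : (∃ m, NormalFor U C a m) := state_nonempty hcomp hC ha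
      have hmin : MinimalIn (canon hcomp hC).prec
          {t : (canon hcomp hC).S | (canon hcomp hC).StateSat t a} ⟨a, hsa⟩ := by
        refine ⟨(stateSat_iff hcomp hC a).mpr (hC.1 a), ?_⟩
        intro s hs hprec
        exact hprec.2 ((stateSat_iff hcomp hC a).mp hs)
      exact (stateSat_iff hcomp hC b).mp (h ⟨a, hsa⟩ hmin)
  · intro h s hs
    have hsa : C s.val a := (stateSat_iff hcomp hC a).mp hs.1
    have ha : ¬ C a Form.fls := not_fls_of_cons hC s.prop hsa
    have has : C a s.val := by
      by_contra hne
      exact hs.2 ⟨a, state_nonempty hcomp hC ha⟩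
        ((stateSat_iff hcomp hC a).mpr (hC.1 a)) ⟨hsa, hne⟩
    exact (stateSat_iff hcomp hC b).mpr (derived_equiv hC a s.val b has hsa h)

end Stmt7Aux

/-- under compactness, `α ⊦_V β` holds in every cumulative model `V`
whose relation contains `K` iff `(α, β)` belongs to the smallest cumulative
consequence relation containing `K` (i.e. to every cumulative relation containing `K`). -/
theorem stmt7 {V : Type} (U : Set (World V)) (hcomp : Compactness U)
    (K : Set (Form V × Form V)) (a b : Form V) :
    (∀ W : CumulModel V U, (∀ p ∈ K, W.Cons p.1 p.2) → W.Cons a b) ↔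
      (∀ C : Form V → Form V → Prop,
        Cumulative U C → (∀ p ∈ K, C p.1 p.2) → C a b) := by
  constructor
  · intro h C hC hK
    exact (canon_cons hcomp hC a b).mp
      (h (canon hcomp hC) (fun p hp => (canon_cons hcomp hC p.1 p.2).mpr (hK p hp)))
  · intro h W hK
    exact h W.Cons (cons_cumulative W) hK

end KLM
end

section
/- (Representation theorem for preferential relations) Assume the compactness assumption on U. A consequence relation ⊦ is preferential (i.e. cumulative and satisfies Or) if and only if there exists a preferential model W such that ⊦ equals ⊦_W. -/
namespace KLM

variable {V : Type}

section AuxProof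

open Classical

variable {U : Set (World V)} {C : Form V → Form V → Prop}

private def conjList : List (Form V) → Form V
  | [] => Form.neg Form.fls
  | x :: xs => Form.conj x (conjList xs)

private lemma sat_conjList {u : World V} {L : List (Form V)} :
    Sat u (conjList L) ↔ ∀ x ∈ L, Sat u x := by
  induction L with
  | nil => simp [conjList, Sat]
  | cons x xs ih => simp [conjList, Sat, ih]

/-- Derived rule And. -/
private lemma aux_and (hP : Preferential U C) {a b c : Form V}
    (hb : C a b) (hc : C a c) : C a (Form.conj b c) := by
  obtain ⟨⟨hRefl, hLLE, hRW, hCut, hCM⟩, hOr⟩ := hP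
  have h1 : C (Form.conj a b) c := hCM a b c hb hc
  have h2 : C (Form.conj (Form.conj a b) c) (Form.conj b c) :=
    hRW _ _ _ (by intro u hu; simp only [Sat]; tauto) (hRefl _)
  exact hCut a b _ (hCut (Form.conj a b) c _ h2 h1) hb

/-- Derived rule S. -/
private lemma aux_S (hP : Preferential U C) {a b x : Form V}
    (h : C (Form.conj a b) x) : C a (Form.impl b x) := by
  obtain ⟨⟨hRefl, hLLE, hRW, hCut, hCM⟩, hOr⟩ := hP
  have h1 : C (Form.conj a b) (Form.impl b x) :=
    hRW _ _ _ (by intro u hu; simp only [Sat]; tauto) h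
  have h2 : C (Form.conj a (Form.neg b)) (Form.impl b x) :=
    hRW _ _ _ (by intro u hu; simp only [Sat]; tauto) (hRefl _)
  have h3 := hOr _ _ _ h1 h2
  exact hLLE _ _ _ (by intro u hu; simp only [Sat]; tauto) h3

/-- Derived rule: from α ⊦ β and α ⊦ y infer β ⊦ α → y. -/
private lemma aux_P10 (hP : Preferential U C) {α β y : Form V}
    (h1 : C α β) (h2 : C α y) : C β (Form.impl α y) := by
  obtain ⟨⟨hRefl, hLLE, hRW, hCut, hCM⟩, hOr⟩ := hP
  have hcm : C (Form.conj α β) y := hCM _ _ _ h1 h2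
  have ha : C (Form.conj α β) (Form.impl α y) :=
    hRW _ _ _ (by intro u hu; simp only [Sat]; tauto) hcm
  have hb : C (Form.conj (Form.neg α) β) (Form.impl α y) :=
    hRW _ _ _ (by intro u hu; simp only [Sat]; tauto) (hRefl _)
  exact hLLE _ _ _ (by intro u hu; simp only [Sat]; tauto) (hOr _ _ _ ha hb)

/-- Derived rule: if γ ⊦ δ (with δ U-stronger than γ) then δ inherits consequences of γ. -/
private lemma aux_inherit (hP : Preferential U C) {γ δ z : Form V}
    (hsub : ∀ u ∈ U, Sat u δ → Sat u γ) (hd : C γ δ) (hz : C γ z) : C δ z := by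
  obtain ⟨⟨hRefl, hLLE, hRW, hCut, hCM⟩, hOr⟩ := hP
  have hcm : C (Form.conj γ δ) z := hCM _ _ _ hd hz
  exact hLLE _ _ _
    (by intro u hu; simp only [Sat]
        exact ⟨fun h => h.2, fun h => ⟨hsub u hu h, h⟩⟩) hcm

private lemma aux_conj_all (hP : Preferential U C) {a : Form V} :
    ∀ L : List (Form V), (∀ x ∈ L, C a x) → C a (conjList L) := by
  intro L
  induction L with
  | nil =>
    intro _
    exact hP.1.2.2.1 _ _ _ (by intro u hu; simp [conjList, Sat]) (hP.1.1 a)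
  | cons x xs ih =>
    intro h
    exact aux_and hP (h x (by simp)) (ih fun y hy => h y (by simp [hy]))

/-- Compactness: if not α ⊦ β there is a world normal for α refuting β. -/
private lemma aux_K1 (hcomp : Compactness U) (hP : Preferential U C) {a b : Form V}
    (h : ¬ C a b) : ∃ m, NormalFor U C a m ∧ ¬ Sat m b := by
  classical
  have hRW := hP.1.2.2.1
  have hfin : ∀ F : Finset (Form V), ↑F ⊆ ({x | C a x} ∪ {Form.neg b} : Set (Form V)) →
      ∃ u ∈ U, ∀ x ∈ F, Sat u x := by
    intro F hFG
    by_contra hno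
    push_neg at hno
    have hconj : C a (conjList (F.filter (fun x => C a x)).toList) :=
      aux_conj_all hP _ (fun x hx => (Finset.mem_filter.mp (Finset.mem_toList.mp hx)).2)
    refine h (hRW _ _ _ ?_ hconj)
    intro u hu
    simp only [Sat]
    intro hcl
    obtain ⟨x, hxF, hxn⟩ := hno u hu
    rcases hFG hxF with hxc | hxb
    · exact absurd (sat_conjList.mp hcl x
        (Finset.mem_toList.mpr (Finset.mem_filter.mpr ⟨hxF, hxc⟩))) hxn
    · have hxb' : x = Form.neg b := hxb
      subst hxb'
      simp only [Sat] at hxn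
      exact not_not.mp hxn
  obtain ⟨m, hmU, hm⟩ := hcomp _ hfin
  refine ⟨m, ⟨hmU, fun x hx => hm x (Or.inl hx)⟩, ?_⟩
  have hnb := hm (Form.neg b) (Or.inr rfl)
  simpa only [Sat] using hnb

/-- Strengthening normality: normal for c plus satisfying a U-stronger e gives normal for e. -/
private lemma aux_K2 (hP : Preferential U C) {c e : Form V} {m : World V}
    (hm : NormalFor U C c m) (hme : Sat m e) (hec : ∀ u ∈ U, Sat u e → Sat u c) :
    NormalFor U C e m := by
  refine ⟨hm.1, fun x hx => ?_⟩
  have h1 : C (Form.conj c e) x :=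
    hP.1.2.1 _ _ _
      (by intro u hu; simp only [Sat]
          exact ⟨fun h => ⟨hec u hu h, h⟩, fun h => h.2⟩) hx
  have h3 := hm.2 _ (aux_S hP h1)
  simp only [Sat] at h3
  exact h3 hme

/-- Key existence lemma. -/
private lemma aux_K3 (hcomp : Compactness U) (hP : Preferential U C)
    {a b c : Form V} {p : World V}
    (hbc : ∀ u ∈ U, Sat u b → Sat u c) (hpc : NormalFor U C c p)
    (hpa : Sat p a) (hpb : ¬ Sat p b) :
    ∃ q, NormalFor U C (Form.disj c a) q ∧ Sat q a ∧ ¬ Sat q b := by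
  by_cases h : C (Form.disj c a) (Form.impl a b)
  · exfalso
    have hgc : C (Form.disj c a) c := by
      have h0 := aux_and hP (hP.1.1 (Form.disj c a)) h
      refine hP.1.2.2.1 _ _ _ ?_ h0
      intro u hu
      simp only [Sat]
      rintro ⟨h12, himp⟩
      rcases h12 with h1 | h2
      exacts [h1, hbc u hu (himp h2)]
    have hpN : NormalFor U C (Form.disj c a) p := by
      refine ⟨hpc.1, fun x hx => ?_⟩
      have h4 := hpc.2 _ (aux_P10 hP hgc hx)
      simp only [Sat] at h4
      exact h4 (Or.inr hpa)
    have h5 := hpN.2 _ h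
    simp only [Sat] at h5
    exact hpb (h5 hpa)
  · obtain ⟨q, hq, hqn⟩ := aux_K1 hcomp hP h
    simp only [Sat] at hqn
    push_neg at hqn
    exact ⟨q, hq, hqn.1, hqn.2⟩

/-- Key existence lemma for minimality. -/
private lemma aux_C1 (hcomp : Compactness U) (hP : Preferential U C)
    {a e : Form V} {n : World V}
    (hn : NormalFor U C e n) (hna : Sat n a) (hnN : ¬ NormalFor U C a n) :
    ∃ q, NormalFor U C (Form.disj a e) q ∧ Sat q a ∧ ¬ Sat q e := by
  by_cases h : C (Form.disj a e) (Form.impl a e)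
  · exfalso
    apply hnN
    have hge : C (Form.disj a e) e := by
      have h0 := aux_and hP (hP.1.1 _) h
      refine hP.1.2.2.1 _ _ _ ?_ h0
      intro u hu
      simp only [Sat]
      rintro ⟨h12, himp⟩
      rcases h12 with h1 | h2
      exacts [himp h1, h2]
    have hnd : NormalFor U C (Form.disj a e) n :=
      ⟨hn.1, fun z hz => hn.2 z (aux_inherit hP (by intro u hu hh; exact Or.inr hh) hge hz)⟩
    exact aux_K2 hP hnd hna (by intro u hu hh; exact Or.inl hh)
  · obtain ⟨q, hq, hqn⟩ := aux_K1 hcomp hP h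
    simp only [Sat] at hqn
    push_neg at hqn
    exact ⟨q, hq, hqn.1, hqn.2⟩

end AuxProof

/-- Representation theorem for preferential relations: under compactness,
a consequence relation is preferential iff it is defined by some preferential model. -/
theorem stmt16 {V : Type} (U : Set (World V)) (C : Form V → Form V → Prop)
    (hcomp : Compactness U) :
    Preferential U C ↔ ∃ W : PrefModel V U, ∀ a b : Form V, C a b ↔ W.Cons a b := by
  constructor
  · -- hard direction: build the canonical model
    intro hP
    refine ⟨{ S := {s : World V × Form V // NormalFor U C s.2 s.1}
            , l := fun s => s.1.1
            , l_mem := fun s => s.2.1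
            , prec := fun s t => (∀ u ∈ U, Sat u t.1.2 → Sat u s.1.2) ∧
                ¬ NormalFor U C s.1.2 t.1.1 ∧ ¬ Sat s.1.1 t.1.2
            , irrefl := ?_
            , trans := ?_
            , smooth := ?_ }, ?_⟩
    · rintro s ⟨hv, hn, hs⟩
      exact hs (s.2.2 _ (hP.1.1 _))
    · rintro s t r ⟨v1, n1, s1⟩ ⟨v2, n2, s2⟩
      refine ⟨fun u hu hx => v1 u hu (v2 u hu hx), fun hh => n2 ?_, fun hh => s1 (v2 _ s.2.1 hh)⟩
      exact aux_K2 hP hh (v2 _ r.2.1 (r.2.2 _ (hP.1.1 _))) v1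
    · intro a t ht
      by_cases hex : ∃ s : {s : World V × Form V // NormalFor U C s.2 s.1},
          Sat s.1.1 a ∧ ((∀ u ∈ U, Sat u t.1.2 → Sat u s.1.2) ∧
            ¬ NormalFor U C s.1.2 t.1.1 ∧ ¬ Sat s.1.1 t.1.2)
      · right
        obtain ⟨s, hsa, hv, hnn, hns⟩ := hex
        obtain ⟨q, hqN, hqa, hqb⟩ := aux_K3 hcomp hP hv s.2 hsa hns
        refine ⟨⟨(q, Form.disj s.1.2 a), hqN⟩, ⟨?_, ?_, ?_⟩, ?_, ?_⟩
        · intro u hu hx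
          exact Or.inl (hv u hu hx)
        · intro hh
          exact hnn (aux_K2 hP hh (hv _ t.2.1 (t.2.2 _ (hP.1.1 _)))
            (by intro u hu hx; exact Or.inl hx))
        · exact hqb
        · exact hqa
        · intro r hr hpr
          exact hpr.2.2 (Or.inr hr)
      · left
        exact ⟨ht, fun s hs hpr => hex ⟨s, hs, hpr⟩⟩
    · intro a b
      constructor
      · intro hC s hsmin
        have hN : NormalFor U C a s.1.1 := by
          by_contra hnN
          obtain ⟨q, hqN, hqa, hqe⟩ := aux_C1 hcomp hP s.2 hsmin.1 hnN
          exact hsmin.2 ⟨(q, Form.disj a s.1.2), hqN⟩ hqa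
            ⟨by intro u hu hx; exact Or.inr hx,
             fun hh => hnN (aux_K2 hP hh hsmin.1 (by intro u hu hx; exact Or.inl hx)),
             hqe⟩
        exact hN.2 b hC
      · intro hCons
        by_contra hnC
        obtain ⟨m, hmN, hmb⟩ := aux_K1 hcomp hP hnC
        exact hmb (hCons ⟨(m, a), hmN⟩
          ⟨hmN.2 a (hP.1.1 a), fun r hr hpr => hpr.2.2 hr⟩)
  · -- easy direction: soundness of preferential models
    rintro ⟨W, hW⟩
    have refl' : Reflexivity W.Cons := fun a s hs => hs.1
    have lle' : LLE U W.Cons := by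
      intro a b c hv h s hs
      have hset : {t : W.S | Sat (W.l t) b} = {t : W.S | Sat (W.l t) a} := by
        ext t
        have h2 := hv (W.l t) (W.l_mem t)
        simp only [Sat] at h2
        exact h2.symm
      rw [hset] at hs
      exact h s hs
    have rw' : RW U W.Cons := by
      intro a b c hv h s hs
      have h1 := h s hs
      have h3 := hv (W.l s) (W.l_mem s)
      simp only [Sat] at h3
      exact h3 h1
    have cut' : CutRule W.Cons := by
      intro a b c h1 h2 s hs
      refine h1 s ⟨⟨hs.1, h2 s hs⟩, fun r hr => hs.2 r hr.1⟩
    have cm' : CautMono W.Cons := by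
      intro a b c h1 h2 s hs
      rcases W.smooth a s hs.1.1 with hmin | ⟨r, hrs, hrmin⟩
      · exact h2 s hmin
      · exact absurd hrs (hs.2 r ⟨hrmin.1, h1 r hrmin⟩)
    have or' : OrRule W.Cons := by
      intro a b c h1 h2 s hs
      have hd := hs.1
      simp only [Set.mem_setOf_eq, Sat] at hd
      rcases hd with ha | hb
      · exact h1 s ⟨ha, fun r hr hpr => hs.2 r (Or.inl hr) hpr⟩
      · exact h2 s ⟨hb, fun r hr hpr => hs.2 r (Or.inr hr) hpr⟩
    refine ⟨⟨?_, ?_, ?_, ?_, ?_⟩, ?_⟩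
    · intro a
      exact (hW a a).2 (refl' a)
    · intro a b c hv h
      exact (hW b c).2 (lle' a b c hv ((hW a c).1 h))
    · intro a b c hv h
      exact (hW c b).2 (rw' a b c hv ((hW c a).1 h))
    · intro a b c h1 h2
      exact (hW a c).2 (cut' a b c ((hW _ c).1 h1) ((hW a b).1 h2))
    · intro a b c h1 h2
      exact (hW _ c).2 (cm' a b c ((hW a b).1 h1) ((hW a c).1 h2))
    · intro a b c h1 h2
      exact (hW _ c).2 (or' a b c ((hW a c).1 h1) ((hW b c).1 h2))

end KLM
end
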